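/- arXiv:1702.06266 — 2 statements merged into one kernel-verified Lean document; each statement's English description precedes it below -/
import Mathlib

section
/- Let S be a union-closed set system on a set Ω with infinite breadth which satisfies Condition (B), and suppose that for every spread ℰ in Ω the set system S ⊓ join(ℰ) does not contain T_max(ℰ). Then there exists a spread ℰ in Ω such that S ⊓ join(ℰ) contains T_min(ℰ). -/
open Set Filter
open scoped Classical

variable {Ω : Type*}

/-- A union-closed set system (concrete semilattice) on `Ω`. -/
def UnionClosed (S : Set (Set Ω)) : Prop := ∀ x ∈ S, ∀ y ∈ S, x ∪ y ∈ S

/-- A finite collection of subsets of `Ω` is incompressible if no proper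
subcollection has the same union. -/
def Incompressible (F : Finset (Set Ω)) : Prop :=
  ∀ F' ⊂ F, ⋃₀ (↑F' : Set (Set Ω)) ≠ ⋃₀ (↑F : Set (Set Ω))

/-- `S` has infinite breadth: incompressible subcollections of every size. -/
def InfiniteBreadth (S : Set (Set Ω)) : Prop :=
  ∀ n : ℕ, ∃ F : Finset (Set Ω), ↑F ⊆ S ∧ F.card = n ∧ Incompressible F

/-- `S` has finite breadth. -/
def FiniteBreadth (S : Set (Set Ω)) : Prop :=
  ∃ N : ℕ, ∀ F : Finset (Set Ω), ↑F ⊆ S → Incompressible F → F.card ≤ N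

/-- `S` has breadth at most `m`. -/
def BreadthLE (S : Set (Set Ω)) (m : ℕ) : Prop :=
  ∀ F : Finset (Set Ω), ↑F ⊆ S → Incompressible F → F.card ≤ m

/-- `S ⊓ a = { x ∩ a : x ∈ S }`. -/
def proj (S : Set (Set Ω)) (a : Set Ω) : Set (Set Ω) := (fun x => x ∩ a) '' S

/-- `S ⊖ a = { x \ a : x ∈ S }`. -/
def ominus (S : Set (Set Ω)) (a : Set Ω) : Set (Set Ω) := (fun x => x \ a) '' S

/-- `S^{−Γ} = { x ∈ S : x ∩ Γ = ∅ }`. -/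
def avoid (S : Set (Set Ω)) (Γ : Set Ω) : Set (Set Ω) := {x ∈ S | x ∩ Γ = ∅}

/-- A spread: pairwise disjoint nonempty finite sets with sizes tending to infinity. -/
def IsSpread (E : ℕ → Set Ω) : Prop :=
  (∀ n, (E n).Finite) ∧ (∀ n, (E n).Nonempty) ∧
  (∀ m n, m ≠ n → Disjoint (E m) (E n)) ∧
  Tendsto (fun n => (E n).ncard) atTop atTop

/-- The join of a spread. -/
def sjoin (E : ℕ → Set Ω) : Set Ω := ⋃ n, E n

/-- The set system `T_max(ℰ)`. -/
def Tmax (E : ℕ → Set Ω) : Set (Set Ω) :=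
  {x | ∃ n, ∃ a : Set Ω, a ⊆ E n ∧ a.Nonempty ∧ x = (⋃ k < n, E k) ∪ a}

/-- The set system `T_min(ℰ)`. -/
def Tmin (E : ℕ → Set Ω) : Set (Set Ω) :=
  {x | ∃ n, ∃ a : Set Ω, a ⊆ E n ∧ a.Nonempty ∧ x = a ∪ ⋃ k > n, E k}

/-- The set system `T_ort(ℰ)`. -/
def Tort (E : ℕ → Set Ω) : Set (Set Ω) :=
  {x | ∃ n, ∃ a : Set Ω, a ⊆ E n ∧ a.Nonempty ∧
        x = (⋃ k < n, E k) ∪ a ∪ ⋃ k > n, E k}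

/-- A refinement of a spread. -/
def Refines (F E : ℕ → Set Ω) : Prop :=
  IsSpread F ∧ ∃ g : ℕ → ℕ, Function.Injective g ∧ ∀ j, F j ⊆ E (g j)

/-- The sequence `a` shatters the spread `E`. -/
def Shatters (a : ℕ → Set Ω) (E : ℕ → Set Ω) : Prop :=
  ∀ (m : ℕ) (y : ℕ → Set Ω), (∀ j < m, y j = a j ∨ y j = (a j)ᶜ) →
    Tendsto (fun n => (E n ∩ ⋂ j < m, y j).ncard) atTop atTop

/-- A finite partition of `Ω`. -/
def IsPartitionC (C : Finset (Set Ω)) : Prop :=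
  (∀ c ∈ C, ∀ d ∈ C, c ≠ d → Disjoint c d) ∧ ⋃₀ (↑C : Set (Set Ω)) = univ

/-- `C` colours the spread `E`. -/
def Colours (C : Finset (Set Ω)) (E : ℕ → Set Ω) : Prop :=
  ∀ c ∈ C, Tendsto (fun n => (c ∩ E n).ncard) atTop atTop

/-- The colouring `C` of the spread `E` is `S`-decisive. -/
def Decisive (S : Set (Set Ω)) (C : Finset (Set Ω)) (E : ℕ → Set Ω) : Prop :=
  ∃ c₀ ∈ C, ∀ x ∈ S, ∃ B : ℕ, ∀ n,
    (x ∩ c₀ ∩ E n).ncard ≤ B ∨ ∃ c ∈ C, (xᶜ ∩ c ∩ E n).ncard ≤ B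

/-- `F` halves `D` with respect to `(E n)_{n ∈ N}`. -/
def Halves (F D : Set Ω) (E : ℕ → Set Ω) (N : Set ℕ) : Prop :=
  Tendsto (fun n => (D ∩ F ∩ E n).ncard) (atTop ⊓ 𝓟 N) atTop ∧
  Tendsto (fun n => ((D \ F) ∩ E n).ncard) (atTop ⊓ 𝓟 N) atTop

/-- `Ew` is a witness of incompressibility for the collection `F`. -/
def IsWitness (F : Finset (Set Ω)) (Ew : Set Ω) : Prop :=
  ∃ w : Set Ω → Ω, (∀ x ∈ F, w x ∈ x ∧ ∀ y ∈ F, y ≠ x → w x ∉ y) ∧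
    Ew = w '' (↑F : Set (Set Ω))

/-- Condition (A). -/
def CondA (S : Set (Set Ω)) : Prop :=
  ∀ k : ℕ, ∀ p ∈ insert (∅ : Set Ω) S, InfiniteBreadth (proj S pᶜ) →
    ∃ F : Finset (Set Ω), ↑F ⊆ ominus S p ∧ F.card = k ∧ Incompressible F ∧
      InfiniteBreadth (proj (ominus S p) (⋃₀ (↑F : Set (Set Ω)))ᶜ)

/-- Condition (B). -/
def CondB (S : Set (Set Ω)) : Prop :=
  ∀ k : ℕ, ∀ c Γ : Set Ω, InfiniteBreadth (proj (avoid S Γ) c) →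
    ∃ F : Finset (Set Ω), ↑F ⊆ proj (avoid S Γ) c ∧ F.card = k ∧ Incompressible F ∧
      ∃ Ew : Set Ω, IsWitness F Ew ∧ InfiniteBreadth (proj (avoid S (Γ ∪ Ew)) c)

/-- Incompressibility in an abstract (sup-)semilattice: the product (sup) over any proper
nonempty subset differs from the product over the whole set. -/
def AIncomp {S : Type*} [SemilatticeSup S] (E : Finset S) : Prop :=
  ∀ E' ⊂ E, ∀ (h' : E'.Nonempty) (h : E.Nonempty), E'.sup' h' id ≠ E.sup' h id

/-- Incompressibility in an abstract meet-semilattice. -/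
def AIncompInf {S : Type*} [SemilatticeInf S] (E : Finset S) : Prop :=
  ∀ E' ⊂ E, ∀ (h' : E'.Nonempty) (h : E.Nonempty), E'.inf' h' id ≠ E.inf' h id

/-- The standard spread on ℕ × ℕ: `E0 n = {(n,k) : k ≤ n}` (0-based, |E0 n| = n+1). -/
def E0 : ℕ → Set (ℕ × ℕ) := fun n => {p | p.1 = n ∧ p.2 ≤ n}

/-!
At each stage of the construction the set system `S^{-Γ}` is thick in a region `c`. Condition (B)
supplies `2k` points of `c` outside `Γ`, each separated from the others by a member of `S^{-Γ}`.
Splitting `c` repeatedly along these members keeps thickness on one side, so `c` shrinks to a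
thick region `r` on which each separating member is either full or empty; `k` of the points
share the same behaviour. The points join `Γ`, `r` becomes the new region, and the chosen points
form the next block of a spread. Passing to infinitely many stages of the same behaviour, a union
of separating members meets the join of the spread in `a ∪ E_{>n}` (full behaviour: `T_min`), or
every finite nonempty subset of the join is such a trace (empty behaviour: `T_max`).
-/

lemma exists_seq_of_forall_exists {α : Type*} {P : α → Prop} {R : ℕ → α → α → Prop}
    (h : ∀ n a, P a → ∃ b, P b ∧ R n a b) {a₀ : α} (h₀ : P a₀) :
    ∃ f : ℕ → α, ∀ n, P (f n) ∧ R n (f n) (f (n + 1)) := by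
  have : Nonempty α := ⟨a₀⟩
  choose! next hnextP hnextR using h
  let f : ℕ → α := fun n => Nat.rec a₀ (fun n a => next n a) n
  have hP : ∀ n, P (f n) := fun n => by
    induction n with
    | zero => exact h₀
    | succ n ih => exact hnextP n _ ih
  exact ⟨f, fun n => ⟨hP n, hnextR n _ (hP n)⟩⟩

lemma incompressible_iff_forall_exists_witness {F : Finset (Set Ω)} :
    Incompressible F ↔ ∀ f ∈ F, ∃ γ ∈ f, ∀ f' ∈ F, f' ≠ f → γ ∉ f' := by
  constructor
  · intro h f hf
    have hss : ⋃₀ (↑(F.erase f) : Set (Set Ω)) ⊂ ⋃₀ (↑F : Set (Set Ω)) :=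
      (sUnion_subset_sUnion (Finset.coe_subset.2 (F.erase_subset f))).ssubset_of_ne
        (h _ (Finset.erase_ssubset hf))
    obtain ⟨γ, ⟨g, hgF, hγg⟩, hγ⟩ := exists_of_ssubset hss
    have hgf : g = f := by
      by_contra hgf
      exact hγ ⟨g, Finset.mem_coe.2 (Finset.mem_erase.2 ⟨hgf, hgF⟩), hγg⟩
    exact ⟨γ, hgf ▸ hγg, fun f' hf' hne hγf' =>
      hγ ⟨f', Finset.mem_coe.2 (Finset.mem_erase.2 ⟨hne, hf'⟩), hγf'⟩⟩
  · intro h F' hF' hEq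
    obtain ⟨f, hfF, hfF'⟩ := Finset.exists_of_ssubset hF'
    obtain ⟨γ, hγf, hγ⟩ := h f hfF
    obtain ⟨g, hgF', hγg⟩ : γ ∈ ⋃₀ (↑F' : Set (Set Ω)) := hEq ▸ ⟨f, hfF, hγf⟩
    exact hγ g (hF'.1 hgF') (fun e => hfF' (e ▸ hgF')) hγg

lemma incompressible_image_inter {F : Finset (Set Ω)} {e : Set Ω}
    (hF : ∀ f ∈ F, ∃ γ ∈ f ∩ e, ∀ f' ∈ F, f' ≠ f → γ ∉ f') :
    Incompressible (F.image (· ∩ e)) ∧ (F.image (· ∩ e)).card = F.card := by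
  have hinj : ∀ f ∈ F, ∀ f' ∈ F, f' ∩ e = f ∩ e → f' = f := by
    intro f hf f' hf' heq
    by_contra hne
    obtain ⟨γ, hγ, hsep⟩ := hF f hf
    exact hsep f' hf' hne (heq ▸ hγ).1
  refine ⟨incompressible_iff_forall_exists_witness.2 ?_,
    Finset.card_image_of_injOn fun f hf f' hf' heq => (hinj f hf f' hf' heq.symm).symm⟩
  simp only [Finset.mem_image, ne_eq, forall_exists_index, and_imp, forall_apply_eq_imp_iff₂]
  intro f hf
  obtain ⟨γ, hγ, hsep⟩ := hF f hf
  exact ⟨γ, hγ, fun f' hf' hne hγ' => hsep f' hf' (fun h => hne (h ▸ rfl)) hγ'.1⟩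

lemma proj_proj (U : Set (Set Ω)) (a b : Set Ω) : proj (proj U a) b = proj U (a ∩ b) := by
  simp only [proj, image_image, inter_assoc]

lemma UnionClosed.proj {S : Set (Set Ω)} (hS : UnionClosed S) (a : Set Ω) :
    UnionClosed (proj S a) := by
  rintro _ ⟨x, hx, rfl⟩ _ ⟨y, hy, rfl⟩
  exact ⟨x ∪ y, hS x hx y hy, union_inter_distrib_right x y a⟩

lemma UnionClosed.biUnion_mem {S : Set (Set Ω)} (hS : UnionClosed S) {ι : Type*} {D : Set ι}
    (hD : D.Finite) (hne : D.Nonempty) {t : ι → Set Ω} (ht : ∀ i ∈ D, t i ∈ S) :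
    ⋃ i ∈ D, t i ∈ S :=
  SupClosed.biSup_mem_of_nonempty hS hD hne ht

lemma exists_incompressible_proj_of_le_card_filter {U : Set (Set Ω)} {F : Finset (Set Ω)}
    (hFU : ↑F ⊆ U) {e : Set Ω} {n : ℕ}
    (hn : n ≤ (F.filter fun f => ∃ γ ∈ f ∩ e, ∀ f' ∈ F, f' ≠ f → γ ∉ f').card) :
    ∃ G : Finset (Set Ω), ↑G ⊆ proj U e ∧ G.card = n ∧ Incompressible G := by
  obtain ⟨G, hG, rfl⟩ := Finset.exists_subset_card_eq hn
  have hGF : G ⊆ F := hG.trans (Finset.filter_subset _ _)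
  obtain ⟨hinc, hcard⟩ := incompressible_image_inter (F := G) (e := e) fun f hf => by
    obtain ⟨γ, hγ, hsep⟩ := (Finset.mem_filter.1 (hG hf)).2
    exact ⟨γ, hγ, fun f' hf' => hsep f' (hGF hf')⟩
  refine ⟨_, ?_, hcard, hinc⟩
  intro g hg
  obtain ⟨f, hf, rfl⟩ := Finset.mem_image.1 (Finset.mem_coe.1 hg)
  exact ⟨f, hFU (hGF hf), rfl⟩

lemma InfiniteBreadth.proj_or_proj_compl {U : Set (Set Ω)} (h : InfiniteBreadth U) (d : Set Ω) :
    InfiniteBreadth (proj U d) ∨ InfiniteBreadth (proj U dᶜ) := by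
  by_contra! hcon
  obtain ⟨h₁, h₂⟩ := hcon
  simp only [InfiniteBreadth, not_forall, not_exists, not_and] at h₁ h₂
  obtain ⟨n₁, h₁⟩ := h₁
  obtain ⟨n₂, h₂⟩ := h₂
  obtain ⟨F, hFU, hcard, hinc⟩ := h (n₁ + n₂)
  set side : Set Ω → Finset (Set Ω) := fun e =>
    F.filter fun f => ∃ γ ∈ f ∩ e, ∀ f' ∈ F, f' ≠ f → γ ∉ f'
  have hcover : F ⊆ side d ∪ side dᶜ := by
    intro f hf
    obtain ⟨γ, hγf, hsep⟩ := incompressible_iff_forall_exists_witness.1 hinc f hf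
    by_cases hγd : γ ∈ d
    · exact Finset.mem_union_left _ (Finset.mem_filter.2 ⟨hf, γ, ⟨hγf, hγd⟩, hsep⟩)
    · exact Finset.mem_union_right _ (Finset.mem_filter.2 ⟨hf, γ, ⟨hγf, hγd⟩, hsep⟩)
  have hle := (Finset.card_le_card hcover).trans (Finset.card_union_le _ _)
  rcases (by omega : n₁ ≤ (side d).card ∨ n₂ ≤ (side dᶜ).card) with hn | hn
  · obtain ⟨G, hGU, hGcard, hGinc⟩ := exists_incompressible_proj_of_le_card_filter hFU hn
    exact h₁ G hGU hGcard hGinc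
  · obtain ⟨G, hGU, hGcard, hGinc⟩ := exists_incompressible_proj_of_le_card_filter hFU hn
    exact h₂ G hGU hGcard hGinc

lemma InfiniteBreadth.exists_proj_subset_or_disjoint {U : Set (Set Ω)} {c : Set Ω}
    (h : InfiniteBreadth (proj U c)) (W : Finset Ω) (X : Ω → Set Ω) :
    ∃ r ⊆ c, InfiniteBreadth (proj U r) ∧ ∀ γ ∈ W, r ⊆ X γ ∨ Disjoint r (X γ) := by
  induction W using Finset.induction_on generalizing c with
  | empty => exact ⟨c, subset_rfl, h, by simp⟩
  | @insert γ₀ W _ ih =>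
    have hsplit := h.proj_or_proj_compl (X γ₀)
    rw [proj_proj, proj_proj] at hsplit
    rcases hsplit with h' | h'
    all_goals
      obtain ⟨r, hr, hthick, hsort⟩ := ih h'
      refine ⟨r, hr.trans inter_subset_left, hthick, ?_⟩
      simp only [Finset.mem_insert, forall_eq_or_imp]
      refine ⟨?_, hsort⟩
    · exact Or.inl (hr.trans inter_subset_right)
    · exact Or.inr (subset_compl_iff_disjoint_right.1 (hr.trans inter_subset_right))

lemma CondB.exists_separated {S : Set (Set Ω)} (hB : CondB S) {Γ c : Set Ω}
    (h : InfiniteBreadth (proj (avoid S Γ) c)) (k : ℕ) :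
    ∃ W : Finset Ω, W.card = k ∧ ↑W ⊆ c ∧ (∀ γ ∈ W, ∃ X ∈ avoid S Γ, X ∩ ↑W = {γ}) ∧
      InfiniteBreadth (proj (avoid S (Γ ∪ ↑W)) c) := by
  obtain ⟨F, hF, hcard, -, Ew, ⟨w, hw, rfl⟩, hthick⟩ := hB k c Γ h
  have hwF : ∀ f ∈ F, ∀ f' ∈ F, w f' ∈ f ↔ f' = f := fun f hf f' hf' =>
    ⟨fun hmem => by_contra fun hne => (hw f' hf').2 f hf (Ne.symm hne) hmem,
      fun e => e ▸ (hw f' hf').1⟩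
  have hfc : ∀ f ∈ F, f ⊆ c := by
    intro f hf
    obtain ⟨X, -, rfl⟩ := hF hf
    exact inter_subset_right
  refine ⟨F.image w, ?_, ?_, ?_, by rwa [Finset.coe_image]⟩
  · exact hcard ▸ Finset.card_image_of_injOn fun f hf f' hf' heq =>
      (hwF f' hf' f hf).1 (by rw [heq]; exact (hw f' hf').1)
  · simp only [Finset.coe_image, image_subset_iff]
    exact fun f hf => hfc f hf (hw f hf).1
  · simp only [Finset.mem_image, forall_exists_index, and_imp, forall_apply_eq_imp_iff₂]
    intro f hf
    obtain ⟨X, hX, hXf⟩ := hF hf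
    refine ⟨X, hX, ?_⟩
    ext p
    simp only [Finset.coe_image, mem_inter_iff, mem_image, Finset.mem_coe, mem_singleton_iff]
    constructor
    · rintro ⟨hpX, f', hf', rfl⟩
      have hw' : w f' ∈ f := hXf ▸ ⟨hpX, hfc f' hf' (hw f' hf').1⟩
      rw [(hwF f hf f' hf').1 hw']
    · rintro rfl
      exact ⟨(hXf ▸ (hw f hf).1 : w f ∈ X ∩ c).1, f, hf, rfl⟩

/-- One stage of the construction of the spread: `W` is its next block, and the next stage works
inside `c'` while avoiding `Γ'`. -/
structure IsStaircaseStep (S : Set (Set Ω)) (k : ℕ) (Γ c Γ' c' : Set Ω) (W : Finset Ω)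
    (b : Bool) : Prop where
  Γ_subset : Γ ⊆ Γ'
  c_subset : c' ⊆ c
  subset_c : ↑W ⊆ c
  subset_Γ : ↑W ⊆ Γ'
  le_card : k ≤ W.card
  separated : ∀ γ ∈ W, ∃ X ∈ avoid S Γ, X ∩ ↑W = {γ} ∧ bif b then c' ⊆ X else Disjoint c' X

lemma IsStaircaseStep.mono {S : Set (Set Ω)} {k k' : ℕ} {Γ c Γ' c' Γ'' c'' : Set Ω}
    {W : Finset Ω} {b : Bool} (h : IsStaircaseStep S k Γ c Γ' c' W b) (hk : k' ≤ k)
    (hΓ : Γ' ⊆ Γ'') (hc : c'' ⊆ c') : IsStaircaseStep S k' Γ c Γ'' c'' W b where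
  Γ_subset := h.Γ_subset.trans hΓ
  c_subset := hc.trans h.c_subset
  subset_c := h.subset_c
  subset_Γ := h.subset_Γ.trans hΓ
  le_card := hk.trans h.le_card
  separated γ hγ := by
    obtain ⟨X, hX, hXW, hXc⟩ := h.separated γ hγ
    refine ⟨X, hX, hXW, ?_⟩
    cases b
    · exact hXc.mono_left hc
    · exact hc.trans hXc

lemma CondB.exists_isStaircaseStep {S : Set (Set Ω)} (hB : CondB S) {Γ c : Set Ω}
    (h : InfiniteBreadth (proj (avoid S Γ) c)) (k : ℕ) :
    ∃ Γ' c' W b, InfiniteBreadth (proj (avoid S Γ') c') ∧ IsStaircaseStep S k Γ c Γ' c' W b := by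
  obtain ⟨W, hcard, hWc, hsep, hthick⟩ := hB.exists_separated h (2 * k)
  choose! X hXS hXW using hsep
  obtain ⟨r, hrc, hr, hsort⟩ := hthick.exists_proj_subset_or_disjoint W X
  have hbuild : ∀ W' ⊆ W, ∀ b : Bool, k ≤ W'.card →
      (∀ γ ∈ W', bif b then r ⊆ X γ else Disjoint r (X γ)) →
      IsStaircaseStep S k Γ c (Γ ∪ ↑W) r W' b := by
    intro W' hW' b hk hb
    have hW'c : (↑W' : Set Ω) ⊆ ↑W := Finset.coe_subset.2 hW'
    refine ⟨subset_union_left, hrc, hW'c.trans hWc, hW'c.trans subset_union_right, hk,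
      fun γ hγ => ⟨X γ, hXS γ (hW' hγ), ?_, hb γ hγ⟩⟩
    apply Subset.antisymm
    · exact (inter_subset_inter_right _ hW'c).trans (hXW γ (hW' hγ)).subset
    · exact singleton_subset_iff.2 ⟨(singleton_subset_iff.1 (hXW γ (hW' hγ)).ge).1, hγ⟩
  have hsplit := W.card_filter_add_card_filter_not (fun γ => r ⊆ X γ)
  rcases (by omega : k ≤ (W.filter fun γ => r ⊆ X γ).card ∨
      k ≤ (W.filter fun γ => ¬ r ⊆ X γ).card) with hk | hk
  · refine ⟨_, _, _, true, hr, hbuild _ (Finset.filter_subset _ _) true hk fun γ hγ => ?_⟩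
    exact (Finset.mem_filter.1 hγ).2
  · refine ⟨_, _, _, false, hr, hbuild _ (Finset.filter_subset _ _) false hk fun γ hγ => ?_⟩
    obtain ⟨hγW, hγr⟩ := Finset.mem_filter.1 hγ
    exact (hsort γ hγW).resolve_left hγr

def IsStaircase (S : Set (Set Ω)) (Γ c : ℕ → Set Ω) (W : ℕ → Finset Ω) (b : Bool) : Prop :=
  ∀ n, IsStaircaseStep S (n + 1) (Γ n) (c n) (Γ (n + 1)) (c (n + 1)) (W n) b

lemma CondB.exists_isStaircase {S : Set (Set Ω)} (hB : CondB S) (hb : InfiniteBreadth S) :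
    ∃ Γ c W b, IsStaircase S Γ c W b := by
  have h₀ : InfiniteBreadth (proj (avoid S ∅) univ) := by
    simpa [proj, avoid] using hb
  obtain ⟨p, hp⟩ := exists_seq_of_forall_exists
    (P := fun p : Set Ω × Set Ω => InfiniteBreadth (proj (avoid S p.1) p.2))
    (R := fun n p q => ∃ W b, IsStaircaseStep S (n + 1) p.1 p.2 q.1 q.2 W b)
    (fun n p hp => by
      obtain ⟨Γ', c', W, b, hthick, hstep⟩ := hB.exists_isStaircaseStep hp (n + 1)
      exact ⟨(Γ', c'), hthick, W, b, hstep⟩) (a₀ := (∅, univ)) h₀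
  choose W b hstep using fun n => (hp n).2
  have hΓ : Monotone fun n => (p n).1 := monotone_nat_of_le_succ fun n => (hstep n).Γ_subset
  have hc : Antitone fun n => (p n).2 := antitone_nat_of_succ_le fun n => (hstep n).c_subset
  obtain ⟨b₀, hb₀⟩ : ∃ b₀, ∃ᶠ n in atTop, b n = b₀ := by
    have hbool : ∃ᶠ n in atTop, b n = true ∨ b n = false :=
      Frequently.of_forall fun n => (b n).eq_false_or_eq_true
    rcases frequently_or_distrib.1 hbool with h | h
    exacts [⟨true, h⟩, ⟨false, h⟩]
  obtain ⟨φ, hφ, hφb⟩ := extraction_of_frequently_atTop hb₀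
  refine ⟨fun i => (p (φ i)).1, fun i => (p (φ i)).2, fun i => W (φ i), b₀, fun i => ?_⟩
  exact (hφb i ▸ hstep (φ i)).mono (by have := hφ.le_apply (x := i); omega)
    (hΓ (hφ (Nat.lt_succ_self i))) (hc (hφ (Nat.lt_succ_self i)))

namespace IsStaircase

variable {S : Set (Set Ω)} {Γ c : ℕ → Set Ω} {W : ℕ → Finset Ω} {b : Bool}

lemma monotone_Γ (h : IsStaircase S Γ c W b) : Monotone Γ :=
  monotone_nat_of_le_succ fun n => (h n).Γ_subset

lemma antitone_c (h : IsStaircase S Γ c W b) : Antitone c :=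
  antitone_nat_of_succ_le fun n => (h n).c_subset

lemma exists_separating (h : IsStaircase S Γ c W b) {n : ℕ} {γ : Ω} (hγ : γ ∈ W n) :
    ∃ X ∈ S, (∀ j < n, Disjoint X ↑(W j)) ∧ X ∩ ↑(W n) = {γ} ∧
      ∀ j > n, bif b then ↑(W j) ⊆ X else Disjoint X ↑(W j) := by
  obtain ⟨X, ⟨hXS, hXΓ⟩, hXW, hXc⟩ := (h n).separated γ hγ
  refine ⟨X, hXS, fun j hj => ?_, hXW, fun j hj => ?_⟩
  · refine (disjoint_iff_inter_eq_empty.2 hXΓ).mono_right ?_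
    exact (h j).subset_Γ.trans (h.monotone_Γ hj)
  · have hWj : ↑(W j) ⊆ c (n + 1) := (h j).subset_c.trans (h.antitone_c hj)
    cases b
    · exact (hXc.mono_left hWj).symm
    · exact hWj.trans hXc

lemma isSpread (h : IsStaircase S Γ c W b) : IsSpread fun n => (W n : Set Ω) := by
  have hdisj : ∀ m n, m < n → Disjoint (W m : Set Ω) (W n) := by
    intro m n hmn
    rw [Set.disjoint_right]
    intro γ' hγ' hγ'm
    obtain ⟨X, -, hlow, hXW, -⟩ := h.exists_separating hγ'
    exact Set.disjoint_left.1 (hlow m hmn) (singleton_subset_iff.1 hXW.ge).1 hγ'm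
  refine ⟨fun n => (W n).finite_toSet, fun n => ?_, fun m n hmn => ?_, ?_⟩
  · exact Finset.coe_nonempty.2 (Finset.card_pos.1 (by have := (h n).le_card; omega))
  · rcases hmn.lt_or_gt with hmn | hmn
    exacts [hdisj m n hmn, (hdisj n m hmn).symm]
  · simp only [ncard_coe_finset]
    exact tendsto_atTop_mono (fun n => (h n).le_card) (tendsto_add_atTop_nat 1)

lemma insert_mem_proj_sjoin_of_true (h : IsStaircase S Γ c W true) {n : ℕ} {γ : Ω}
    (hγ : γ ∈ W n) : insert γ (⋃ k > n, (W k : Set Ω)) ∈ proj S (sjoin fun n => (W n : Set Ω)) := by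
  obtain ⟨X, hXS, hlow, hXW, hhigh⟩ := h.exists_separating hγ
  refine ⟨X, hXS, ?_⟩
  ext p
  simp only [sjoin, mem_inter_iff, mem_iUnion, mem_insert_iff, exists_prop]
  constructor
  · rintro ⟨hpX, j, hpj⟩
    rcases lt_trichotomy j n with hj | rfl | hj
    · exact absurd hpj (Set.disjoint_left.1 (hlow j hj) hpX)
    · exact Or.inl (hXW.subset ⟨hpX, hpj⟩)
    · exact Or.inr ⟨j, hj, hpj⟩
  · rintro (rfl | ⟨j, hj, hpj⟩)
    · exact ⟨(singleton_subset_iff.1 hXW.ge).1, n, hγ⟩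
    · exact ⟨hhigh j hj hpj, j, hpj⟩

lemma singleton_mem_proj_sjoin_of_false (h : IsStaircase S Γ c W false) {n : ℕ} {γ : Ω}
    (hγ : γ ∈ W n) : {γ} ∈ proj S (sjoin fun n => (W n : Set Ω)) := by
  obtain ⟨X, hXS, hlow, hXW, hhigh⟩ := h.exists_separating hγ
  refine ⟨X, hXS, ?_⟩
  ext p
  simp only [sjoin, mem_inter_iff, mem_iUnion, mem_singleton_iff]
  constructor
  · rintro ⟨hpX, j, hpj⟩
    rcases lt_trichotomy j n with hj | rfl | hj
    · exact absurd hpj (Set.disjoint_left.1 (hlow j hj) hpX)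
    · exact hXW.subset ⟨hpX, hpj⟩
    · exact absurd hpj (Set.disjoint_left.1 (hhigh j hj) hpX)
  · rintro rfl
    exact ⟨(singleton_subset_iff.1 hXW.ge).1, n, hγ⟩

lemma tmin_subset_proj (hS : UnionClosed S) (h : IsStaircase S Γ c W true) :
    Tmin (fun n => (W n : Set Ω)) ⊆ proj S (sjoin fun n => (W n : Set Ω)) := by
  rintro _ ⟨n, a, haW, hane, rfl⟩
  have htrace : a ∪ ⋃ k > n, (W k : Set Ω) = ⋃ γ ∈ a, insert γ (⋃ k > n, (W k : Set Ω)) := by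
    simp only [insert_eq]
    aesop
  rw [htrace]
  exact (hS.proj _).biUnion_mem ((W n).finite_toSet.subset haW) hane
    fun γ hγ => h.insert_mem_proj_sjoin_of_true (haW hγ)

lemma tmax_subset_proj (hS : UnionClosed S) (h : IsStaircase S Γ c W false) :
    Tmax (fun n => (W n : Set Ω)) ⊆ proj S (sjoin fun n => (W n : Set Ω)) := by
  rintro _ ⟨n, a, haW, hane, rfl⟩
  rw [← biUnion_of_singleton ((⋃ k < n, (W k : Set Ω)) ∪ a)]
  refine (hS.proj _).biUnion_mem ?_ (hane.mono subset_union_right) fun γ hγ => ?_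
  · exact ((finite_lt_nat n).biUnion fun k _ => (W k).finite_toSet).union
      ((W n).finite_toSet.subset haW)
  · simp only [mem_union, mem_iUnion, exists_prop] at hγ
    rcases hγ with ⟨k, -, hγk⟩ | hγa
    · exact h.singleton_mem_proj_sjoin_of_false hγk
    · exact h.singleton_mem_proj_sjoin_of_false (haW hγa)

end IsStaircase

/-- Infinite breadth plus Condition (B), with no spread realising `T_max`,
yields a spread realising `T_min`. -/
theorem stmt5 {Ω : Type*} (S : Set (Set Ω)) (hS : UnionClosed S)
    (hb : InfiniteBreadth S) (hB : CondB S)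
    (hnomax : ∀ E : ℕ → Set Ω, IsSpread E → ¬ Tmax E ⊆ proj S (sjoin E)) :
    ∃ E : ℕ → Set Ω, IsSpread E ∧ Tmin E ⊆ proj S (sjoin E) := by
  obtain ⟨Γ, c, W, b, h⟩ := hB.exists_isStaircase hb
  cases b
  · exact absurd (h.tmax_subset_proj hS) (hnomax _ h.isSpread)
  · exact ⟨_, h.isSpread, h.tmin_subset_proj hS⟩
end

section
/- Let m, k ∈ ℕ and let x_1, …, x_{m+k} be pairwise distinct nonempty subsets of a set Ω such that the family {x_1, …, x_{m+k}} is incompressible. Set d = x_1 ∪ ⋯ ∪ x_m. Then the sets x_{m+1} \ d, …, x_{m+k} \ d are pairwise distinct and nonempty, and the family {x_{m+1} \ d, …, x_{m+k} \ d} is incompressible. -/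
open Set Filter
open scoped Classical

variable {Ω : Type*}

/-! A finite family is incompressible exactly when each member has a private point, lying in
no other member. Removing `d = x₁ ∪ ⋯ ∪ xₘ` keeps the private point of every `x_{m+j}`, since
`d` is a union of other members; so the sets `x_{m+j} \ d` still have private points. -/

theorem incompressible_iff_forall_exists_private {F : Finset (Set Ω)} :
    Incompressible F ↔ ∀ s ∈ F, ∃ w ∈ s, ∀ t ∈ F, t ≠ s → w ∉ t := by
  constructor
  · intro hF s hs
    have hsub : ⋃₀ (↑(F.erase s) : Set (Set Ω)) ⊆ ⋃₀ ↑F :=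
      sUnion_subset_sUnion (by simp)
    obtain ⟨w, ⟨t, htF, hwt⟩, hw⟩ :=
      exists_of_ssubset (hsub.ssubset_of_ne (hF _ (Finset.erase_ssubset hs)))
    have hprivate : ∀ t ∈ F, t ≠ s → w ∉ t := fun t htF hts hwt =>
      hw ⟨t, Finset.mem_coe.2 (Finset.mem_erase.2 ⟨hts, htF⟩), hwt⟩
    refine ⟨w, ?_, hprivate⟩
    by_contra hws
    exact hprivate t htF (by rintro rfl; exact hws hwt) hwt
  · intro hF F' hF' hunion
    obtain ⟨s, hsF, hsF'⟩ := Finset.exists_of_ssubset hF'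
    obtain ⟨w, hws, hw⟩ := hF s hsF
    have : w ∈ ⋃₀ (↑F' : Set (Set Ω)) := hunion ▸ ⟨s, hsF, hws⟩
    obtain ⟨t, htF', hwt⟩ := this
    exact hw t (hF'.subset htF') (by rintro rfl; exact hsF' htF') hwt

def HasPrivatePoints {ι : Type*} (x : ι → Set Ω) : Prop :=
  ∀ i, ∃ w ∈ x i, ∀ j, j ≠ i → w ∉ x j

namespace HasPrivatePoints

variable {ι : Type*} {x : ι → Set Ω}

theorem nonempty (hx : HasPrivatePoints x) (i : ι) : (x i).Nonempty :=
  let ⟨w, hw, _⟩ := hx i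
  ⟨w, hw⟩

theorem injective (hx : HasPrivatePoints x) : Function.Injective x := by
  intro i j hij
  by_contra hne
  obtain ⟨w, hw, hprivate⟩ := hx i
  exact hprivate j (Ne.symm hne) (hij ▸ hw)

theorem incompressible_image [Fintype ι] (hx : HasPrivatePoints x) :
    Incompressible (Finset.univ.image x) := by
  refine incompressible_iff_forall_exists_private.2 ?_
  simp only [Finset.mem_image, Finset.mem_univ, true_and, forall_exists_index,
    forall_apply_eq_imp_iff]
  intro i
  obtain ⟨w, hw, hprivate⟩ := hx i
  exact ⟨w, hw, fun j hji => hprivate j (fun h => hji (h ▸ rfl))⟩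

theorem sdiff_iUnion {κ κ' : Type*} (hx : HasPrivatePoints x) {e : κ → ι} {e' : κ' → ι}
    (he : Function.Injective e) (hee' : ∀ i j, e' i ≠ e j) :
    HasPrivatePoints fun j => x (e j) \ ⋃ i, x (e' i) := by
  intro j
  obtain ⟨w, hw, hprivate⟩ := hx (e j)
  refine ⟨w, ⟨hw, ?_⟩, fun j' hj' hw' => hprivate (e j') (he.ne hj') hw'.1⟩
  simp only [mem_iUnion, not_exists]
  exact fun i => hprivate (e' i) (hee' i j)

end HasPrivatePoints

theorem Incompressible.hasPrivatePoints {ι : Type*} [Fintype ι] {x : ι → Set Ω}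
    (hx : Function.Injective x) (hinc : Incompressible (Finset.univ.image x)) :
    HasPrivatePoints x := by
  intro i
  obtain ⟨w, hw, hprivate⟩ :=
    incompressible_iff_forall_exists_private.1 hinc (x i) (Finset.mem_image_of_mem x (by simp))
  exact ⟨w, hw, fun j hji => hprivate (x j) (by simp) (hx.ne hji)⟩

theorem stmt6_general {Ω : Type*} (m k : ℕ) (x : Fin (m + k) → Set Ω)
    (hinj : Function.Injective x)
    (hinc : Incompressible (Finset.univ.image x)) :
    Function.Injective
        (fun j : Fin k => x (Fin.natAdd m j) \ ⋃ i : Fin m, x (Fin.castAdd k i)) ∧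
    (∀ j : Fin k,
        (x (Fin.natAdd m j) \ ⋃ i : Fin m, x (Fin.castAdd k i)).Nonempty) ∧
    Incompressible (Finset.univ.image
        (fun j : Fin k => x (Fin.natAdd m j) \ ⋃ i : Fin m, x (Fin.castAdd k i))) := by
  have hdisjoint : ∀ (i : Fin m) (j : Fin k), Fin.castAdd k i ≠ Fin.natAdd m j := fun i j h => by
    have := congrArg Fin.val h
    simp only [Fin.val_castAdd, Fin.val_natAdd] at this
    omega
  have hrest := (hinc.hasPrivatePoints hinj).sdiff_iUnion (Fin.natAdd_injective k m) hdisjoint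
  exact ⟨hrest.injective, hrest.nonempty, hrest.incompressible_image⟩

/-- Removing the union of the first `m` sets from an incompressible family of `m + k`
distinct nonempty sets leaves an incompressible family of `k` distinct nonempty sets. -/
theorem stmt6 {Ω : Type*} (m k : ℕ) (x : Fin (m + k) → Set Ω)
    (hinj : Function.Injective x) (hne : ∀ i, (x i).Nonempty)
    (hinc : Incompressible (Finset.univ.image x)) :
    Function.Injective
        (fun j : Fin k => x (Fin.natAdd m j) \ ⋃ i : Fin m, x (Fin.castAdd k i)) ∧
    (∀ j : Fin k,
        (x (Fin.natAdd m j) \ ⋃ i : Fin m, x (Fin.castAdd k i)).Nonempty) ∧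
    Incompressible (Finset.univ.image
        (fun j : Fin k => x (Fin.natAdd m j) \ ⋃ i : Fin m, x (Fin.castAdd k i))) :=
  stmt6_general m k x hinj hinc
end
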